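/- If H is a graph with γ_I(H) = γ(H) = 3, then for any graph G, γ_I(G∘H) = γ_{(2,2,2,0)}(G). -/

import Mathlib

open scoped Classical
open Finset SimpleGraph

/-- A `w`-dominating function: `f : V → {0,…,l}` with `f(N(v)) ≥ w_{f(v)}` for all `v`. -/
def WDom {V : Type*} [Fintype V] (G : SimpleGraph V) {l : ℕ} (w : Fin (l+1) → ℕ)
    (f : V → Fin (l+1)) : Prop :=
  ∀ v, w (f v) ≤ ∑ u, if G.Adj v u then (f u : ℕ) else 0

/-- The `w`-domination number. -/
noncomputable def gammaW {V : Type*} [Fintype V] (G : SimpleGraph V) {l : ℕ}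
    (w : Fin (l+1) → ℕ) : ℕ :=
  sInf {n | ∃ f : V → Fin (l+1), WDom G w f ∧ ∑ v, (f v : ℕ) = n}

/-- The Italian domination number `γ_I = γ_{(2,0,0)}`. -/
noncomputable def gammaI {V : Type*} [Fintype V] (G : SimpleGraph V) : ℕ :=
  gammaW G ![2,0,0]

/-- The domination number. -/
noncomputable def gamma {V : Type*} [Fintype V] (G : SimpleGraph V) : ℕ :=
  sInf {n | ∃ S : Finset V, (∀ v, v ∈ S ∨ ∃ u ∈ S, G.Adj u v) ∧ S.card = n}

/-- The total domination number. -/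
noncomputable def gammaT {V : Type*} [Fintype V] (G : SimpleGraph V) : ℕ :=
  sInf {n | ∃ S : Finset V, (∀ v, ∃ u ∈ S, G.Adj u v) ∧ S.card = n}

/-- The 2-domination number. -/
noncomputable def gamma2 {V : Type*} [Fintype V] (G : SimpleGraph V) : ℕ :=
  sInf {n | ∃ S : Finset V, (∀ v ∉ S, 2 ≤ (S.filter (fun u => G.Adj u v)).card) ∧ S.card = n}

/-- The double domination number. -/
noncomputable def gammaX2 {V : Type*} [Fintype V] (G : SimpleGraph V) : ℕ :=
  sInf {n | ∃ S : Finset V, (∀ v, 2 ≤ (S.filter (fun u => u = v ∨ G.Adj u v)).card) ∧ S.card = n}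

/-- The double total domination number. -/
noncomputable def gammaX2T {V : Type*} [Fintype V] (G : SimpleGraph V) : ℕ :=
  sInf {n | ∃ S : Finset V, (∀ v, 2 ≤ (S.filter (fun u => G.Adj u v)).card) ∧ S.card = n}

/-- The lexicographic product `G ∘ H`. -/
def lexProd {V W : Type*} (G : SimpleGraph V) (H : SimpleGraph W) : SimpleGraph (V × W) where
  Adj x y := G.Adj x.1 y.1 ∨ (x.1 = y.1 ∧ H.Adj x.2 y.2)
  symm := by
    constructor
    rintro x y (h | ⟨h1, h2⟩)
    · exact Or.inl h.symm
    · exact Or.inr ⟨h1.symm, h2.symm⟩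
  loopless := by
    constructor
    rintro x (h | ⟨_, h⟩)
    · exact G.ne_of_adj h rfl
    · exact H.ne_of_adj h rfl

/-!
An Italian function on `G ∘ H` is assembled from a `(2,2,2,0)`-function `f` on `G` and an
Italian function `h` of weight `3` on `H`: every fibre `{v} × H` with `f v = 3` carries a copy of
`h`, every other fibre carries the weight `f v` on one fixed vertex. Conversely, let `g` be an
Italian function on `G ∘ H` and cap the weight of each fibre at `3`. If the fibre over `v` has
weight at most `2` while the fibres over the neighbours of `v` carry total weight at most `1`, then
the support of `g` inside the fibre over `v` dominates `H` with at most two vertices, contradicting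
`γ(H) = 3`; so the capped fibre weights form a `(2,2,2,0)`-function of weight at most that of `g`.
-/

section Domination

variable {V : Type*} [Fintype V] (G : SimpleGraph V)

theorem gammaW_le_sum {l : ℕ} {w : Fin (l + 1) → ℕ} {f : V → Fin (l + 1)} (hf : WDom G w f) :
    gammaW G w ≤ ∑ v, (f v : ℕ) :=
  Nat.sInf_le ⟨f, hf, rfl⟩

/-- The hypothesis makes the constant function `Fin.last l` dominating, so the infimum defining
`gammaW G w` is over a nonempty set and is attained. -/
theorem exists_wDom_sum_eq_gammaW {l : ℕ} {w : Fin (l + 1) → ℕ} (hw : w (Fin.last l) = 0) :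
    ∃ f : V → Fin (l + 1), WDom G w f ∧ ∑ v, (f v : ℕ) = gammaW G w :=
  Nat.sInf_mem (s := {n | ∃ f : V → Fin (l + 1), WDom G w f ∧ ∑ v, (f v : ℕ) = n})
    ⟨_, fun _ => Fin.last l, fun v => by simp [hw], rfl⟩

theorem gamma_le_card {S : Finset V} (hS : ∀ v, v ∈ S ∨ ∃ u ∈ S, G.Adj u v) :
    gamma G ≤ S.card :=
  Nat.sInf_le ⟨S, hS, rfl⟩

end Domination

theorem min_sum_le_sum_min {ι : Type*} (s : Finset ι) (a : ι → ℕ) {k m : ℕ} (hkm : k ≤ m) :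
    min k (∑ i ∈ s, a i) ≤ ∑ i ∈ s, min m (a i) := by
  induction s using Finset.cons_induction with
  | empty => simp
  | cons i s hi ih => rw [Finset.sum_cons, Finset.sum_cons]; omega

theorem card_filter_ne_zero_le_sum {ι : Type*} [Fintype ι] (a : ι → ℕ) :
    (univ.filter fun i => a i ≠ 0).card ≤ ∑ i, a i :=
  calc (univ.filter fun i => a i ≠ 0).card
      ≤ ∑ i ∈ univ.filter fun i => a i ≠ 0, a i := by
        simpa using card_nsmul_le_sum _ a 1 fun i hi => Nat.one_le_iff_ne_zero.2 (mem_filter.1 hi).2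
    _ ≤ ∑ i, a i := sum_le_sum_of_subset (subset_univ _)

theorem weight2220_eq_two : ∀ i : Fin 4, i ≠ 3 → ![2, 2, 2, 0] i = 2 := by decide

theorem sum_adj_lexProd {V W M : Type*} [Fintype V] [Fintype W] [AddCommMonoid M]
    (G : SimpleGraph V) (H : SimpleGraph W) (g : V × W → M) (v : V) (w : W) :
    ∑ p, (if (lexProd G H).Adj (v, w) p then g p else 0)
      = (∑ v', if G.Adj v v' then ∑ w', g (v', w') else 0)
        + ∑ w', if H.Adj w w' then g (v, w') else 0 := by
  have fiber : ∀ v', (∑ w', if (lexProd G H).Adj (v, w) (v', w') then g (v', w') else 0)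
      = (if G.Adj v v' then ∑ w', g (v', w') else 0)
        + if v' = v then ∑ w', (if H.Adj w w' then g (v, w') else 0) else 0 := by
    intro v'
    by_cases hG : G.Adj v v'
    · simp [lexProd, hG, hG.ne']
    · by_cases hv : v' = v
      · subst hv; simp [lexProd]
      · simp [lexProd, hG, hv, Ne.symm hv]
  rw [Fintype.sum_prod_type, sum_congr rfl fun v' _ => fiber v', sum_add_distrib, sum_ite_eq']
  simp

section UpperBound

variable {V W : Type*}

noncomputable def lexLift (f : V → Fin 4) (h : W → Fin 3) (w₀ : W) : V × W → Fin 3 :=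
  fun p => if hv : f p.1 = 3 then h p.2 else if p.2 = w₀ then (f p.1).castPred hv else 0

theorem sum_lexLift_fiber [Fintype W] {f : V → Fin 4} {h : W → Fin 3}
    (hh : ∑ w, (h w : ℕ) = 3) (w₀ : W) (v : V) : ∑ w, (lexLift f h w₀ (v, w) : ℕ) = f v := by
  by_cases hv : f v = 3
  · simp [lexLift, hv, hh]
  · simp [lexLift, hv, apply_ite (Fin.val : Fin 3 → ℕ)]

variable [Fintype V] [Fintype W] {G : SimpleGraph V} {H : SimpleGraph W}

theorem wDom_lexLift {f : V → Fin 4} {h : W → Fin 3} (hf : WDom G ![2, 2, 2, 0] f)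
    (hh : WDom H ![2, 0, 0] h) (hsum : ∑ w, (h w : ℕ) = 3) (w₀ : W) :
    WDom (lexProd G H) ![2, 0, 0] (lexLift f h w₀) := by
  rintro ⟨v, w⟩
  by_cases hg : lexLift f h w₀ (v, w) = 0
  swap
  · have weight_zero : ∀ i : Fin 3, i ≠ 0 → ![2, 0, 0] i = 0 := by decide
    simp [weight_zero _ hg]
  rw [hg, sum_adj_lexProd]
  simp only [sum_lexLift_fiber hsum]
  by_cases hv : f v = 3
  · have key := hh w
    simp only [lexLift, hv, dite_true] at hg ⊢
    rw [hg] at key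
    exact key.trans (Nat.le_add_left _ _)
  · have key := hf v
    rw [weight2220_eq_two _ hv] at key
    exact key.trans (Nat.le_add_right _ _)

theorem gammaI_lexProd_le (hH : gammaI H = 3) :
    gammaI (lexProd G H) ≤ gammaW G ![2, 2, 2, 0] := by
  obtain ⟨h, hh, hsum⟩ := exists_wDom_sum_eq_gammaW H (w := ![2, 0, 0]) rfl
  obtain ⟨f, hf, hfsum⟩ := exists_wDom_sum_eq_gammaW G (w := ![2, 2, 2, 0]) rfl
  rw [show gammaW H ![2, 0, 0] = 3 from hH] at hsum
  obtain ⟨w₀, -, -⟩ := exists_ne_zero_of_sum_ne_zero (hsum.trans_ne (by norm_num))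
  calc gammaI (lexProd G H) ≤ ∑ p, (lexLift f h w₀ p : ℕ) :=
        gammaW_le_sum _ (wDom_lexLift hf hh hsum w₀)
    _ = gammaW G ![2, 2, 2, 0] := by
        rw [Fintype.sum_prod_type, ← hfsum]
        simp only [sum_lexLift_fiber hsum]

end UpperBound

section LowerBound

variable {V W : Type*} [Fintype V] [Fintype W] {G : SimpleGraph V} {H : SimpleGraph W}

theorem gamma_le_fiber_sum {g : V × W → Fin 3} (hg : WDom (lexProd G H) ![2, 0, 0] g) {v : V}
    (hv : (∑ v', if G.Adj v v' then ∑ w, (g (v', w) : ℕ) else 0) ≤ 1) :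
    gamma H ≤ ∑ w, (g (v, w) : ℕ) := by
  refine (gamma_le_card H fun w => ?_).trans (card_filter_ne_zero_le_sum _)
  by_cases hw : g (v, w) = 0
  · right
    have key := hg (v, w)
    rw [hw, sum_adj_lexProd] at key
    change 2 ≤ _ at key
    obtain ⟨u, -, hu⟩ := exists_ne_zero_of_sum_ne_zero
      (by omega : (∑ u, if H.Adj w u then (g (v, u) : ℕ) else 0) ≠ 0)
    by_cases hwu : H.Adj w u
    · exact ⟨u, by simpa [hwu] using hu, hwu.symm⟩
    · simp [hwu] at hu
  · exact .inl (mem_filter.2 ⟨mem_univ _, fun h => hw (Fin.ext h)⟩)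

theorem two_le_sum_adj_fiber (hH : 3 ≤ gamma H) {g : V × W → Fin 3}
    (hg : WDom (lexProd G H) ![2, 0, 0] g) {v : V} (hv : ∑ w, (g (v, w) : ℕ) ≤ 2) :
    2 ≤ ∑ v', if G.Adj v v' then ∑ w, (g (v', w) : ℕ) else 0 := by
  by_contra! h
  have := gamma_le_fiber_sum hg (v := v) (by omega)
  omega

def cappedFiberSum (g : V × W → Fin 3) (v : V) : Fin 4 :=
  ⟨min 3 (∑ w, (g (v, w) : ℕ)), by omega⟩

theorem wDom_cappedFiberSum (hH : 3 ≤ gamma H) {g : V × W → Fin 3}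
    (hg : WDom (lexProd G H) ![2, 0, 0] g) : WDom G ![2, 2, 2, 0] (cappedFiberSum g) := by
  intro v
  by_cases hv : cappedFiberSum g v = 3
  · rw [hv]
    exact Nat.zero_le _
  have hsmall : ∑ w, (g (v, w) : ℕ) ≤ 2 := by
    simp only [cappedFiberSum, Fin.ext_iff] at hv
    omega
  calc ![2, 2, 2, 0] (cappedFiberSum g v)
      = min 2 (∑ v' ∈ univ.filter (G.Adj v), ∑ w, (g (v', w) : ℕ)) := by
        rw [weight2220_eq_two _ hv, sum_filter, eq_comm,
          min_eq_left (two_le_sum_adj_fiber hH hg hsmall)]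
    _ ≤ ∑ v' ∈ univ.filter (G.Adj v), min 3 (∑ w, (g (v', w) : ℕ)) :=
        min_sum_le_sum_min _ _ (by norm_num)
    _ = ∑ v', if G.Adj v v' then (cappedFiberSum g v' : ℕ) else 0 := sum_filter ..

theorem gammaW_le_gammaI_lexProd (hH : 3 ≤ gamma H) :
    gammaW G ![2, 2, 2, 0] ≤ gammaI (lexProd G H) := by
  obtain ⟨g, hg, hgsum⟩ := exists_wDom_sum_eq_gammaW (lexProd G H) (w := ![2, 0, 0]) rfl
  calc gammaW G ![2, 2, 2, 0] ≤ ∑ v, (cappedFiberSum g v : ℕ) :=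
        gammaW_le_sum G (wDom_cappedFiberSum hH hg)
    _ ≤ ∑ v, ∑ w, (g (v, w) : ℕ) := sum_le_sum fun v _ => min_le_right _ _
    _ = gammaI (lexProd G H) := by rwa [Fintype.sum_prod_type] at hgsum

end LowerBound

theorem italian_lex_of_gammaI_eq_gamma_eq_three {V W : Type*} [Fintype V] [Fintype W]
    (G : SimpleGraph V) (H : SimpleGraph W)
    (hHI : gammaI H = 3) (hH : gamma H = 3) :
    gammaI (lexProd G H) = gammaW G ![2,2,2,0] :=
  le_antisymm (gammaI_lexProd_le hHI) (gammaW_le_gammaI_lexProd hH.ge)
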